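/- Let M be a non-zero bi-nilpotent Dieudonné module over k which is generated by an element z ∈ M, with d = dim_k(M/FM) and c = dim_k(M/VM). Then: (i) for every integer q with 0 ≤ q ≤ c, the maximal integer α such that F^qM ⊆ p^αM equals 0 (i.e., F^qM ⊆ M but F^qM ⊄ pM); (ii) for every integer q with 0 ≤ q ≤ d, the minimal integer β such that p^βM ⊆ F^qM equals q (i.e., p^qM ⊆ F^qM but p^qM ⊄ pF^qM). -/

import Mathlib

/-!
Write `pM` for `p • ⊤`. The heart of the matter is that `F^q z ∉ pM` for `q ≤ c`. For `q = 0`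
this holds because `pM` is stable under `F` and `V`, so `z ∈ pM` would force `pM = M`, which is
impossible for a non-zero free module. If `F^(q+1) z ∈ pM = F(VM)`, then `F^q z ∈ VM` since `F` is
injective, and `VM` together with `z, F z, …, F^(q-1) z` spans an `F`- and `V`-stable submodule
containing `z`, hence all of `M`; so `c ≤ q`.

This gives (i) at once, and by the symmetry `F ↔ V` also `V^q z ∉ pM` for `q ≤ d`. For (ii),
`p^q M = F^q V^q M ⊆ F^q M`; and if `p^b M ⊆ F^q M` with `b < q`, applying `V^q` to `p^b z` gives
`p^b V^q z ∈ p^q M`, so `V^q z ∈ pM` after cancelling `p^b`.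
-/

noncomputable section

namespace DieudonneStmt

section SemilinearPair

open Submodule Set
open scoped Pointwise

variable {R M : Type*} [CommRing R] [AddCommGroup M] [Module R M]

variable (R) in
def IsGenerator (F V : M → M) (z : M) : Prop :=
  ∀ P : Submodule R M, z ∈ P → (∀ x ∈ P, F x ∈ P) → (∀ x ∈ P, V x ∈ P) → P = ⊤

theorem IsGenerator.swap {F V : M → M} {z : M} (h : IsGenerator R F V z) :
    IsGenerator R V F z :=
  fun P hz hV hF => h P hz hF hV

theorem smul_top_ne_top_of_not_isUnit [Module.Free R M] [Nontrivial M] {r : R}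
    (hr : ¬IsUnit r) : r • (⊤ : Submodule R M) ≠ ⊤ := by
  intro htop
  let b := Module.Free.chooseBasis R M
  obtain ⟨i⟩ := b.index_nonempty
  obtain ⟨y, -, hy⟩ := (mem_smul_pointwise_iff_exists _ _ _).1 (htop ▸ mem_top : b i ∈ r • ⊤)
  refine hr (IsUnit.of_mul_eq_one (b.repr y i) ?_)
  simpa using congr(b.repr $hy i)

theorem pow_smul_mem_smul_top (r : R) {n : ℕ} (hn : 0 < n) (y : M) :
    r ^ n • y ∈ r • (⊤ : Submodule R M) := by
  obtain ⟨m, rfl⟩ := Nat.exists_eq_add_of_lt hn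
  rw [zero_add, pow_succ', mul_smul]
  exact smul_mem_pointwise_smul _ _ _ mem_top

variable {σ τ : R →+* R} (F : M →ₛₗ[σ] M) (V : M →ₛₗ[τ] M) {p : ℕ}

theorem smul_top_le_comap_smul_top {r : R} (hr : σ r = r) :
    r • (⊤ : Submodule R M) ≤ comap F (r • ⊤) := by
  intro x hx
  obtain ⟨y, -, rfl⟩ := (mem_smul_pointwise_iff_exists _ _ _).1 hx
  rw [mem_comap, F.map_smulₛₗ, hr]
  exact smul_mem_pointwise_smul _ _ _ mem_top

theorem iterate_map_smul_of_map_eq {r : R} (hr : σ r = r) (n : ℕ) (x : M) :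
    (⇑F)^[n] (r • x) = r • (⇑F)^[n] x :=
  Function.Commute.iterate_left (fun y => by simp [hr]) n x

theorem iterate_iterate_eq_pow_smul (hFV : ∀ x, F (V x) = (p : R) • x) (n : ℕ) (x : M) :
    (⇑F)^[n] ((⇑V)^[n] x) = (p : R) ^ n • x := by
  induction n with
  | zero => simp
  | succ n ih =>
    rw [Function.iterate_succ_apply, Function.iterate_succ_apply', hFV,
      iterate_map_smul_of_map_eq F (map_natCast σ p), ih, smul_smul, ← pow_succ']

theorem mem_comap_iterate_iff (N : Submodule R M) (n : ℕ) (x : M) :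
    x ∈ (comap F)^[n] N ↔ (⇑F)^[n] x ∈ N := by
  induction n generalizing N with
  | zero => rfl
  | succ n ih => rw [Function.iterate_succ_apply, ih, mem_comap, ← Function.iterate_succ_apply' F]

theorem iterate_mem_pow_smul_top_of_mem_span_range_iterate
    (hVF : ∀ x, V (F x) = (p : R) • x) {n : ℕ} {x : M} (hx : x ∈ span R (range (⇑F)^[n])) :
    (⇑V)^[n] x ∈ (p : R) ^ n • (⊤ : Submodule R M) := by
  have hle : span R (range (⇑F)^[n]) ≤ (comap V)^[n] ((p : R) ^ n • ⊤) := by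
    rw [span_le]
    rintro _ ⟨y, rfl⟩
    rw [SetLike.mem_coe, mem_comap_iterate_iff, iterate_iterate_eq_pow_smul V F hVF]
    exact smul_mem_pointwise_smul _ _ _ mem_top
  exact (mem_comap_iterate_iff V _ n x).1 (hle hx)

theorem le_of_pow_smul_mem_span_range_iterate [IsDomain R] [Module.IsTorsionFree R M]
    (hVF : ∀ x, V (F x) = (p : R) • x) (hp : (p : R) ≠ 0) {b q : ℕ} {z : M}
    (hb : (p : R) ^ b • z ∈ span R (range (⇑F)^[q]))
    (hz : (⇑V)^[q] z ∉ (p : R) • (⊤ : Submodule R M)) : q ≤ b := by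
  by_contra! hbq
  obtain ⟨y, -, hy⟩ := (mem_smul_pointwise_iff_exists _ _ _).1
    (iterate_mem_pow_smul_top_of_mem_span_range_iterate F V hVF hb)
  obtain ⟨e, rfl⟩ := Nat.exists_eq_add_of_le hbq.le
  rw [iterate_map_smul_of_map_eq V (r := (p : R) ^ b) (by simp), pow_add, mul_smul] at hy
  rw [← smul_right_injective M (pow_ne_zero b hp) hy] at hz
  exact hz (pow_smul_mem_smul_top _ (by omega) y)

theorem IsGenerator.span_eq_top {z : M} (h : IsGenerator R F V z) {s : Set M}
    (hz : z ∈ span R s) (hF : ∀ x ∈ s, F x ∈ span R s) (hV : ∀ x ∈ s, V x ∈ span R s) :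
    span R s = ⊤ :=
  h _ hz (fun _ hx => span_le (p := (span R s).comap F) |>.2 hF hx)
    (fun _ hx => span_le (p := (span R s).comap V) |>.2 hV hx)

theorem IsGenerator.smul_top_eq_top {z : M} (h : IsGenerator R F V z) {r : R} (hσ : σ r = r)
    (hτ : τ r = r) (hz : z ∈ r • (⊤ : Submodule R M)) : r • (⊤ : Submodule R M) = ⊤ :=
  h _ hz (fun _ hx => smul_top_le_comap_smul_top F hσ hx)
    (fun _ hx => smul_top_le_comap_smul_top V hτ hx)

theorem IsGenerator.sup_span_iterate_eq_top {z : M} (h : IsGenerator R F V z)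
    (hFV : ∀ x, F (V x) = (p : R) • x) (hVF : ∀ x, V (F x) = (p : R) • x) {n : ℕ}
    (hn : (⇑F)^[n] z ∈ range V) :
    span R (range V) ⊔ span R (range fun i : Fin n => (⇑F)^[i] z) = ⊤ := by
  rw [← span_union]
  refine h.span_eq_top F V ?_ ?_ (fun x _ => subset_span (.inl ⟨x, rfl⟩))
  · cases n with
    | zero => exact subset_span (.inl hn)
    | succ n => exact subset_span (.inr ⟨0, rfl⟩)
  · rintro _ (⟨x, rfl⟩ | ⟨i, rfl⟩)
    · exact subset_span (.inl ⟨F x, by rw [hFV, hVF]⟩)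
    · rw [← Function.iterate_succ_apply' F]
      rcases (Nat.succ_le_of_lt i.isLt).lt_or_eq with hi | hi
      · exact subset_span (.inr ⟨⟨i + 1, hi⟩, rfl⟩)
      · exact subset_span (.inl (by rwa [hi]))

theorem IsGenerator.iterate_notMem_smul_top [IsDomain R] [Module.Free R M] [Nontrivial M]
    {z : M} (h : IsGenerator R F V z) (hFV : ∀ x, F (V x) = (p : R) • x)
    (hVF : ∀ x, V (F x) = (p : R) • x) (hp : (p : R) ≠ 0) (hpu : ¬IsUnit (p : R)) {c : ℕ}
    (hc : c ∈ lowerBounds {n | ∃ x : Fin n → M, span R (range V) ⊔ span R (range x) = ⊤})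
    {q : ℕ} (hq : q ≤ c) : (⇑F)^[q] z ∉ (p : R) • (⊤ : Submodule R M) := by
  intro hmem
  cases q with
  | zero =>
    exact smul_top_ne_top_of_not_isUnit hpu
      (h.smul_top_eq_top F V (map_natCast σ p) (map_natCast τ p) hmem)
  | succ q =>
    have hFinj : Function.Injective F := Function.Injective.of_comp (f := V) <| by
      simpa [Function.comp_def, hVF] using smul_right_injective M hp
    obtain ⟨w, -, hw⟩ := (mem_smul_pointwise_iff_exists _ _ _).1 hmem
    have hV : (⇑F)^[q] z ∈ range V :=
      ⟨w, hFinj (by rw [hFV, hw, Function.iterate_succ_apply'])⟩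
    have := hc ⟨_, h.sup_span_iterate_eq_top F V hFV hVF hV⟩
    omega

end SemilinearPair

variable (p : ℕ) [Fact p.Prime] (k : Type*) [Field k] [IsAlgClosed k] [CharP k p]
variable (M : Type*) [AddCommGroup M] [Module (WittVector p k) M]

theorem alpha_beta_of_cyclic_dieudonne_module
    -- `M` is a free `W(k)`-module of finite rank, non-zero
    [Module.Free (WittVector p k) M] [Nontrivial M]
    -- `F` is `σ`-semilinear, `V` is `σ⁻¹`-semilinear, and `F ∘ V = V ∘ F = p·id`
    (F V : M → M)
    (hFadd : ∀ x y, F (x + y) = F x + F y)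
    (hVadd : ∀ x y, V (x + y) = V x + V y)
    (hFsmul : ∀ (a : WittVector p k) (x : M), F (a • x) = WittVector.frobeniusEquiv p k a • F x)
    (hVsmul : ∀ (a : WittVector p k) (x : M),
      V (a • x) = (WittVector.frobeniusEquiv p k).symm a • V x)
    (hFV : ∀ x, F (V x) = (p : WittVector p k) • x)
    (hVF : ∀ x, V (F x) = (p : WittVector p k) • x)
    -- `z` generates `M`: the only `W(k)`-submodule containing `z` stable under `F` and `V` is `M`
    (z : M)
    (hz : ∀ P : Submodule (WittVector p k) M,
      z ∈ P → (∀ x ∈ P, F x ∈ P) → (∀ x ∈ P, V x ∈ P) → P = ⊤)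
    -- `d = dim_k (M/FM)`: `d` is the least number of elements generating `M` over `FM`
    (c d : ℕ)
    (hd : IsLeast {n : ℕ | ∃ x : Fin n → M,
      Submodule.span (WittVector p k) (Set.range F) ⊔
        Submodule.span (WittVector p k) (Set.range x) = ⊤} d)
    -- `c = dim_k (M/VM)`
    (hc : IsLeast {n : ℕ | ∃ x : Fin n → M,
      Submodule.span (WittVector p k) (Set.range V) ⊔
        Submodule.span (WittVector p k) (Set.range x) = ⊤} c) :
    (∀ q : ℕ, q ≤ c →
      IsGreatest {a : ℕ | ∀ x ∈ Submodule.span (WittVector p k) (Set.range (F^[q])),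
        ∃ y : M, x = ((p : WittVector p k) ^ a) • y} 0) ∧
    (∀ q : ℕ, q ≤ d →
      IsLeast {b : ℕ | ∀ x : M,
        ((p : WittVector p k) ^ b) • x ∈
          Submodule.span (WittVector p k) (Set.range (F^[q]))} q) := by
  let Fₗ : M →ₛₗ[(WittVector.frobeniusEquiv p k : WittVector p k →+* WittVector p k)] M :=
    { toFun := F, map_add' := hFadd, map_smul' := hFsmul }
  let Vₗ : M →ₛₗ[((WittVector.frobeniusEquiv p k).symm : WittVector p k →+* WittVector p k)] M :=
    { toFun := V, map_add' := hVadd, map_smul' := hVsmul }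
  have hp := WittVector.p_nonzero p k
  have hpu : ¬IsUnit (p : WittVector p k) := (WittVector.irreducible p).not_isUnit
  have hFz (q : ℕ) (hq : q ≤ c) :=
    IsGenerator.iterate_notMem_smul_top Fₗ Vₗ hz hFV hVF hp hpu hc.2 hq
  have hVz (q : ℕ) (hq : q ≤ d) :=
    IsGenerator.iterate_notMem_smul_top Vₗ Fₗ (IsGenerator.swap hz) hVF hFV hp hpu hd.2 hq
  refine ⟨fun q hq => ⟨fun x _ => ⟨x, by rw [pow_zero, one_smul]⟩, fun a ha => ?_⟩,
    fun q hq => ⟨fun x => ?_, fun b hb => ?_⟩⟩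
  · by_contra! ha0
    obtain ⟨y, hy⟩ := ha _ (Submodule.subset_span ⟨z, rfl⟩)
    exact hFz q hq (hy ▸ pow_smul_mem_smul_top _ ha0 y)
  · rw [← iterate_iterate_eq_pow_smul Fₗ Vₗ hFV]
    exact Submodule.subset_span ⟨_, rfl⟩
  · exact le_of_pow_smul_mem_span_range_iterate Fₗ Vₗ hVF hp (hb z) (hVz q hq)

end DieudonneStmt
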